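/- arXiv:2309.04098 — 9 statements merged into one kernel-verified Lean document; each statement's English description precedes it below -/
import Mathlib

section
/- Let γ, A, τ > 0 and g > 1. Set w₀ = A(e^{γAτ} − 1/g)/(e^{γAτ} − 1) and define w(t) = A e^{γAt} g w₀ / (A + (e^{γAt} − 1) g w₀) for t ∈ (0, τ]. Then w₀ > 0, the denominator A + (e^{γAt} − 1) g w₀ is positive for every t ∈ [0, τ], w is differentiable on (0, τ) with w'(t) = γ w(t)(A − w(t)) for all t ∈ (0, τ), the right-limit of w at 0 equals g w₀, and w(τ) = w₀. -/
/-!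
With `c = w(0⁺)`, the function `t ↦ A e^{γAt} c / (A + (e^{γAt} - 1) c)` is the classical solution
of the logistic equation `w' = γ w (A - w)`. Periodicity with the pulse `G(u) = g u` asks for
`w(τ) = w₀` when `c = g w₀`; for the given `w₀` the denominator at `t = τ` equals `A e^{γAτ} g`,
which makes this fixed-point equation immediate.
-/

open Real Filter Topology

noncomputable section

/-- The solution of `w' = γ w (A - w)` with `w(0) = c`. -/
def logisticSol (γ A c t : ℝ) : ℝ :=
  A * exp (γ * A * t) * c / (A + (exp (γ * A * t) - 1) * c)

namespace logisticSol

variable {γ A c : ℝ}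

lemma denom_pos (hA : 0 < A) (hc : 0 ≤ c) {t : ℝ} (ht : 0 ≤ γ * A * t) :
    0 < A + (exp (γ * A * t) - 1) * c := by
  have : 0 ≤ exp (γ * A * t) - 1 := by linarith [one_le_exp ht]
  positivity

lemma hasDerivAt {t : ℝ} (hden : A + (exp (γ * A * t) - 1) * c ≠ 0) :
    HasDerivAt (logisticSol γ A c)
      (γ * logisticSol γ A c t * (A - logisticSol γ A c t)) t := by
  have hexp : HasDerivAt (fun t ↦ exp (γ * A * t)) (exp (γ * A * t) * (γ * A)) t :=
    ((hasDerivAt_id t).const_mul (γ * A)).exp.congr_deriv (by simp)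
  have hnum := (hexp.const_mul A).mul_const c
  have hdenom := ((hexp.sub_const 1).mul_const c).const_add A
  refine (hnum.div hdenom hden).congr_deriv ?_
  simp only [logisticSol]
  generalize exp (γ * A * t) = E at hden ⊢
  -- the quotient-rule identity holds for an arbitrary nonzero denominator
  generalize A + (E - 1) * c = D at hden ⊢
  field_simp

lemma tendsto_nhdsGT_zero (hA : A ≠ 0) :
    Tendsto (logisticSol γ A c) (𝓝[>] 0) (𝓝 c) := by
  have hcont : ContinuousAt (logisticSol γ A c) 0 :=
    ContinuousAt.div (by fun_prop) (by fun_prop) (by simpa using hA)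
  simpa [logisticSol, hA] using hcont.tendsto.mono_left nhdsWithin_le_nhds

end logisticSol

lemma periodic_denom_eq {A E g w₀ : ℝ} (hE : E ≠ 1) (hg : g ≠ 0)
    (hw₀ : w₀ = A * (E - 1 / g) / (E - 1)) :
    A + (E - 1) * (g * w₀) = A * E * g := by
  have : E - 1 ≠ 0 := sub_ne_zero.mpr hE
  rw [hw₀]
  field_simp
  ring

theorem stmt_0 (γ A τ g w₀ : ℝ) (w : ℝ → ℝ)
    (hγ : 0 < γ) (hA : 0 < A) (hτ : 0 < τ) (hg : 1 < g)
    (hw₀ : w₀ = A * (Real.exp (γ * A * τ) - 1 / g) / (Real.exp (γ * A * τ) - 1))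
    (hw : ∀ t, w t = A * Real.exp (γ * A * t) * g * w₀ /
      (A + (Real.exp (γ * A * t) - 1) * g * w₀)) :
    0 < w₀ ∧
    (∀ t ∈ Set.Icc (0:ℝ) τ, 0 < A + (Real.exp (γ * A * t) - 1) * g * w₀) ∧
    (∀ t ∈ Set.Ioo (0:ℝ) τ, HasDerivAt w (γ * w t * (A - w t)) t) ∧
    Filter.Tendsto w (nhdsWithin (0:ℝ) (Set.Ioi 0)) (nhds (g * w₀)) ∧
    w τ = w₀ := by
  have hE : 1 < exp (γ * A * τ) := one_lt_exp_iff.mpr (by positivity)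
  have hw₀_pos : 0 < w₀ := by
    have : 1 / g < 1 := (div_lt_one (by linarith)).mpr hg
    rw [hw₀]
    exact div_pos (by nlinarith) (by linarith)
  have hw_eq : w = logisticSol γ A (g * w₀) := by
    funext t
    simp only [hw, logisticSol, mul_assoc]
  have hden : ∀ t, 0 ≤ t → 0 < A + (exp (γ * A * t) - 1) * g * w₀ := fun t ht ↦ by
    simpa only [mul_assoc] using
      logisticSol.denom_pos (γ := γ) hA (by positivity) (by positivity : 0 ≤ γ * A * t)
  refine ⟨hw₀_pos, fun t ht ↦ hden t ht.1, fun t ht ↦ ?_, ?_, ?_⟩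
  · rw [hw_eq]
    exact logisticSol.hasDerivAt (by simpa only [mul_assoc] using (hden t ht.1.le).ne')
  · rw [hw_eq]
    exact logisticSol.tendsto_nhdsGT_zero hA.ne'
  · rw [hw_eq, logisticSol, periodic_denom_eq hE.ne' (by positivity) hw₀]
    field_simp
end
end

section
/- Let γ, A, τ > 0 and g > 1. Set w₀ = A(e^{γAτ} − 1/g)/(e^{γAτ} − 1) and define w(t) = A e^{γAt} g w₀ / (A + (e^{γAt} − 1) g w₀) for t ∈ (0, τ]. Then w₀ > A, and A < w(t) < g w₀ for every t ∈ (0, τ]. -/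
theorem stmt_1 (γ A τ g w₀ : ℝ) (w : ℝ → ℝ)
    (hγ : 0 < γ) (hA : 0 < A) (hτ : 0 < τ) (hg : 1 < g)
    (hw₀ : w₀ = A * (Real.exp (γ * A * τ) - 1 / g) / (Real.exp (γ * A * τ) - 1))
    (hw : ∀ t, w t = A * Real.exp (γ * A * t) * g * w₀ /
      (A + (Real.exp (γ * A * t) - 1) * g * w₀)) :
    A < w₀ ∧ ∀ t ∈ Set.Ioc (0:ℝ) τ, A < w t ∧ w t < g * w₀ := by
  have hE : 1 < Real.exp (γ * A * τ) := by
    rw [show (1:ℝ) = Real.exp 0 by simp]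
    exact Real.exp_lt_exp.mpr (by positivity)
  have hginv : 1 / g < 1 := by
    rw [div_lt_one (by linarith)]; exact hg
  have hAw₀ : A < w₀ := by
    rw [hw₀, lt_div_iff₀ (by linarith)]
    nlinarith
  refine ⟨hAw₀, fun t ht => ?_⟩
  obtain ⟨ht0, -⟩ := ht
  have he : 1 < Real.exp (γ * A * t) := by
    rw [show (1:ℝ) = Real.exp 0 by simp]
    exact Real.exp_lt_exp.mpr (by positivity)
  set e := Real.exp (γ * A * t) with hedef
  have hgw : A < g * w₀ := by nlinarith
  have hD : 0 < A + (e - 1) * g * w₀ := by nlinarith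
  rw [hw, ← hedef]
  constructor
  · rw [lt_div_iff₀ hD]; nlinarith
  · rw [div_lt_iff₀ hD]
    nlinarith [mul_pos (mul_pos (show (0:ℝ) < e - 1 by linarith) (show (0:ℝ) < g * w₀ - A by linarith)) (show (0:ℝ) < g * w₀ by linarith)]
end

section
/- Let D > 0, α ∈ ℝ, l₁ > 0 and λ₁, λ₂ ∈ ℝ. Let φ₁, φ₂ : [0, l₁] → ℝ be twice continuously differentiable and satisfy −D φ₁''(x) + α φ₁'(x) = λ₁ φ₁(x) and −D φ₂''(x) + α φ₂'(x) = λ₂ φ₂(x) for all x ∈ [0, l₁], with φ₁'(0) = 0, φ₂'(0) = 0 and φ₁(l₁) = 0. Then (λ₁ − λ₂) ∫₀^{l₁} e^{−(α/D)x} φ₁(x) φ₂(x) dx = −D e^{−(α/D) l₁} φ₁'(l₁) φ₂(l₁). -/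
/-!
Multiplying by the integrating factor `e^{-(α/D)x}` makes `Lφ = -Dφ'' + αφ'` formally self-adjoint, so
`e^{-(α/D)x} (φ₂ Lφ₁ - φ₁ Lφ₂)` is the derivative of the weighted Wronskian
`D e^{-(α/D)x} (φ₁ φ₂' - φ₁' φ₂)`. For eigenfunctions the left side is
`(λ₁ - λ₂) e^{-(α/D)x} φ₁ φ₂`; integrating over `[0, l₁]`, the Wronskian vanishes at `0` by the
Neumann conditions and reduces to `-D e^{-(α/D)l₁} φ₁'(l₁) φ₂(l₁)` at `l₁` since `φ₁(l₁) = 0`.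
-/

open Real Set

theorem hasDerivAt_weighted_wronskian {D α x : ℝ} (hD : D ≠ 0) {f g f' g' f'' g'' : ℝ → ℝ}
    (hf : HasDerivAt f (f' x) x) (hf' : HasDerivAt f' (f'' x) x)
    (hg : HasDerivAt g (g' x) x) (hg' : HasDerivAt g' (g'' x) x) :
    HasDerivAt (fun y => D * exp (-(α / D) * y) * (f y * g' y - f' y * g y))
      (exp (-(α / D) * x) *
        (g x * (-D * f'' x + α * f' x) - f x * (-D * g'' x + α * g' x))) x := by
  have hexp : HasDerivAt (fun y => exp (-(α / D) * y)) (exp (-(α / D) * x) * -(α / D)) x :=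
    ((hasDerivAt_id x).const_mul _).exp.congr_deriv (by simp)
  refine ((hexp.const_mul D).mul ((hf.mul hg').sub (hf'.mul hg))).congr_deriv ?_
  simp only [Pi.sub_apply, Pi.mul_apply]
  field_simp
  ring

theorem integral_exp_mul_eigenfunctions_mul {D α a b lam₁ lam₂ : ℝ} (hD : D ≠ 0)
    {φ₁ φ₂ φ₁' φ₂' φ₁'' φ₂'' : ℝ → ℝ}
    (hd₁ : ∀ x ∈ uIcc a b, HasDerivAt φ₁ (φ₁' x) x)
    (hd₁' : ∀ x ∈ uIcc a b, HasDerivAt φ₁' (φ₁'' x) x)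
    (hd₂ : ∀ x ∈ uIcc a b, HasDerivAt φ₂ (φ₂' x) x)
    (hd₂' : ∀ x ∈ uIcc a b, HasDerivAt φ₂' (φ₂'' x) x)
    (hode₁ : ∀ x ∈ uIcc a b, -D * φ₁'' x + α * φ₁' x = lam₁ * φ₁ x)
    (hode₂ : ∀ x ∈ uIcc a b, -D * φ₂'' x + α * φ₂' x = lam₂ * φ₂ x) :
    (lam₁ - lam₂) * ∫ x in a..b, exp (-(α / D) * x) * φ₁ x * φ₂ x =
      D * exp (-(α / D) * b) * (φ₁ b * φ₂' b - φ₁' b * φ₂ b) -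
        D * exp (-(α / D) * a) * (φ₁ a * φ₂' a - φ₁' a * φ₂ a) := by
  have hderiv : ∀ x ∈ uIcc a b,
      HasDerivAt (fun y => D * exp (-(α / D) * y) * (φ₁ y * φ₂' y - φ₁' y * φ₂ y))
        ((lam₁ - lam₂) * (exp (-(α / D) * x) * φ₁ x * φ₂ x)) x := by
    intro x hx
    refine (hasDerivAt_weighted_wronskian hD (hd₁ x hx) (hd₁' x hx) (hd₂ x hx)
      (hd₂' x hx)).congr_deriv ?_
    rw [hode₁ x hx, hode₂ x hx]
    ring
  have hcont : ContinuousOn (fun x => (lam₁ - lam₂) * (exp (-(α / D) * x) * φ₁ x * φ₂ x))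
      (uIcc a b) := by
    have hc₁ : ContinuousOn φ₁ (uIcc a b) := fun x hx => (hd₁ x hx).continuousAt.continuousWithinAt
    have hc₂ : ContinuousOn φ₂ (uIcc a b) := fun x hx => (hd₂ x hx).continuousAt.continuousWithinAt
    fun_prop
  rw [← intervalIntegral.integral_const_mul,
    intervalIntegral.integral_eq_sub_of_hasDerivAt hderiv hcont.intervalIntegrable]

theorem stmt_2_general (D α l₁ lam₁ lam₂ : ℝ) (φ₁ φ₂ φ₁' φ₂' φ₁'' φ₂'' : ℝ → ℝ)
    (hD : 0 < D) (hl₁ : 0 < l₁)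
    (hd₁ : ∀ x ∈ Set.Icc (0:ℝ) l₁, HasDerivAt φ₁ (φ₁' x) x)
    (hd₁' : ∀ x ∈ Set.Icc (0:ℝ) l₁, HasDerivAt φ₁' (φ₁'' x) x)
    (hd₂ : ∀ x ∈ Set.Icc (0:ℝ) l₁, HasDerivAt φ₂ (φ₂' x) x)
    (hd₂' : ∀ x ∈ Set.Icc (0:ℝ) l₁, HasDerivAt φ₂' (φ₂'' x) x)
    (hode₁ : ∀ x ∈ Set.Icc (0:ℝ) l₁, -D * φ₁'' x + α * φ₁' x = lam₁ * φ₁ x)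
    (hode₂ : ∀ x ∈ Set.Icc (0:ℝ) l₁, -D * φ₂'' x + α * φ₂' x = lam₂ * φ₂ x)
    (hb₁ : φ₁' 0 = 0) (hb₂ : φ₂' 0 = 0) (hb₃ : φ₁ l₁ = 0) :
    (lam₁ - lam₂) * ∫ x in (0:ℝ)..l₁, Real.exp (-(α / D) * x) * φ₁ x * φ₂ x
      = -D * Real.exp (-(α / D) * l₁) * φ₁' l₁ * φ₂ l₁ := by
  have hIcc : uIcc 0 l₁ = Icc 0 l₁ := uIcc_of_le hl₁.le
  rw [integral_exp_mul_eigenfunctions_mul hD.ne' (hIcc ▸ hd₁) (hIcc ▸ hd₁') (hIcc ▸ hd₂)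
    (hIcc ▸ hd₂') (hIcc ▸ hode₁) (hIcc ▸ hode₂), hb₁, hb₂, hb₃]
  ring

theorem stmt_2 (D α l₁ lam₁ lam₂ : ℝ) (φ₁ φ₂ φ₁' φ₂' φ₁'' φ₂'' : ℝ → ℝ)
    (hD : 0 < D) (hl₁ : 0 < l₁)
    (hd₁ : ∀ x ∈ Set.Icc (0:ℝ) l₁, HasDerivAt φ₁ (φ₁' x) x)
    (hd₁' : ∀ x ∈ Set.Icc (0:ℝ) l₁, HasDerivAt φ₁' (φ₁'' x) x)
    (hd₂ : ∀ x ∈ Set.Icc (0:ℝ) l₁, HasDerivAt φ₂ (φ₂' x) x)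
    (hd₂' : ∀ x ∈ Set.Icc (0:ℝ) l₁, HasDerivAt φ₂' (φ₂'' x) x)
    (hc₁ : ContinuousOn φ₁'' (Set.Icc (0:ℝ) l₁))
    (hc₂ : ContinuousOn φ₂'' (Set.Icc (0:ℝ) l₁))
    (hode₁ : ∀ x ∈ Set.Icc (0:ℝ) l₁, -D * φ₁'' x + α * φ₁' x = lam₁ * φ₁ x)
    (hode₂ : ∀ x ∈ Set.Icc (0:ℝ) l₁, -D * φ₂'' x + α * φ₂' x = lam₂ * φ₂ x)
    (hb₁ : φ₁' 0 = 0) (hb₂ : φ₂' 0 = 0) (hb₃ : φ₁ l₁ = 0) :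
    (lam₁ - lam₂) * ∫ x in (0:ℝ)..l₁, Real.exp (-(α / D) * x) * φ₁ x * φ₂ x
      = -D * Real.exp (-(α / D) * l₁) * φ₁' l₁ * φ₂ l₁ :=
  stmt_2_general D α l₁ lam₁ lam₂ φ₁ φ₂ φ₁' φ₂' φ₁'' φ₂'' hD hl₁ hd₁ hd₁' hd₂ hd₂' hode₁ hode₂ hb₁
    hb₂ hb₃
end

section
/- Let D > 0, α ∈ ℝ and 0 < l₁ < l₂. Suppose φ₁ : [0, l₁] → ℝ and φ₂ : [0, l₂] → ℝ are twice continuously differentiable and satisfy −D φ₁'' + α φ₁' = λ₁ φ₁ on [0, l₁] and −D φ₂'' + α φ₂' = λ₂ φ₂ on [0, l₂], with φ₁'(0) = φ₂'(0) = 0, φ₁(l₁) = 0, φ₂(l₂) = 0, φ₁(x) > 0 for x ∈ [0, l₁), φ₂(x) > 0 for x ∈ [0, l₂), and φ₁'(l₁) < 0. Then λ₁ > λ₂. (In other words, the principal eigenvalue λ*(D, α, (0,l)) is strictly decreasing in the habitat length l.) -/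
/-! The Wronskian of `φ₁` and `φ₂`, weighted by `exp (-(α / D) x)` so that the first-order terms
cancel, has derivative `(λ₂ - λ₁) / D · exp (-(α / D) x) · φ₁ φ₂`. If `λ₁ ≤ λ₂` it is therefore
nondecreasing on `[0, l₁]`; but it vanishes at `0` by the Neumann conditions and equals
`exp (-(α / D) l₁) φ₁'(l₁) φ₂(l₁) < 0` at `l₁`. -/

open Real Set

noncomputable def weightedWronskian (c : ℝ) (φ φ' ψ ψ' : ℝ → ℝ) (x : ℝ) : ℝ :=
  exp (-(c * x)) * (φ' x * ψ x - φ x * ψ' x)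

section

variable {D α lam mu x : ℝ} {φ φ' φ'' ψ ψ' ψ'' : ℝ → ℝ}

theorem hasDerivAt_weightedWronskian (hD : D ≠ 0)
    (hφ : HasDerivAt φ (φ' x) x) (hφ' : HasDerivAt φ' (φ'' x) x)
    (hψ : HasDerivAt ψ (ψ' x) x) (hψ' : HasDerivAt ψ' (ψ'' x) x)
    (hodeφ : -D * φ'' x + α * φ' x = lam * φ x)
    (hodeψ : -D * ψ'' x + α * ψ' x = mu * ψ x) :
    HasDerivAt (weightedWronskian (α / D) φ φ' ψ ψ')
      ((mu - lam) / D * exp (-(α / D * x)) * (φ x * ψ x)) x := by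
  have hexp : HasDerivAt (fun y => exp (-(α / D * y))) (-(α / D) * exp (-(α / D * x))) x := by
    simpa [mul_comm] using ((hasDerivAt_id x).const_mul (α / D)).neg.exp
  refine (hexp.mul ((hφ'.mul hψ).sub (hφ.mul hψ'))).congr_deriv ?_
  simp only [Pi.sub_apply, Pi.mul_apply]
  field_simp
  linear_combination φ x * hodeψ - ψ x * hodeφ

theorem monotoneOn_weightedWronskian {a b : ℝ} (hD : 0 < D) (hlam : lam ≤ mu)
    (hφ : ∀ x ∈ Icc a b, HasDerivAt φ (φ' x) x) (hφ' : ∀ x ∈ Icc a b, HasDerivAt φ' (φ'' x) x)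
    (hψ : ∀ x ∈ Icc a b, HasDerivAt ψ (ψ' x) x) (hψ' : ∀ x ∈ Icc a b, HasDerivAt ψ' (ψ'' x) x)
    (hodeφ : ∀ x ∈ Icc a b, -D * φ'' x + α * φ' x = lam * φ x)
    (hodeψ : ∀ x ∈ Icc a b, -D * ψ'' x + α * ψ' x = mu * ψ x)
    (hφ_nonneg : ∀ x ∈ Ioo a b, 0 ≤ φ x) (hψ_nonneg : ∀ x ∈ Ioo a b, 0 ≤ ψ x) :
    MonotoneOn (weightedWronskian (α / D) φ φ' ψ ψ') (Icc a b) := by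
  have hW : ∀ x ∈ Icc a b, HasDerivAt (weightedWronskian (α / D) φ φ' ψ ψ')
      ((mu - lam) / D * exp (-(α / D * x)) * (φ x * ψ x)) x := fun x hx =>
    hasDerivAt_weightedWronskian hD.ne' (hφ x hx) (hφ' x hx) (hψ x hx) (hψ' x hx)
      (hodeφ x hx) (hodeψ x hx)
  refine monotoneOn_of_hasDerivWithinAt_nonneg (convex_Icc a b)
    (fun x hx => (hW x hx).continuousAt.continuousWithinAt)
    (fun x hx => (hW x (interior_subset hx)).hasDerivWithinAt) fun x hx => ?_
  rw [interior_Icc] at hx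
  have := hφ_nonneg x hx
  have := hψ_nonneg x hx
  have : 0 ≤ (mu - lam) / D := div_nonneg (sub_nonneg.2 hlam) hD.le
  positivity

end

theorem stmt_3_general (D α l₁ l₂ lam₁ lam₂ : ℝ) (φ₁ φ₂ φ₁' φ₂' φ₁'' φ₂'' : ℝ → ℝ)
    (hD : 0 < D) (hl₁ : 0 < l₁) (hl₁₂ : l₁ < l₂)
    (hd₁ : ∀ x ∈ Set.Icc (0:ℝ) l₁, HasDerivAt φ₁ (φ₁' x) x)
    (hd₁' : ∀ x ∈ Set.Icc (0:ℝ) l₁, HasDerivAt φ₁' (φ₁'' x) x)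
    (hd₂ : ∀ x ∈ Set.Icc (0:ℝ) l₂, HasDerivAt φ₂ (φ₂' x) x)
    (hd₂' : ∀ x ∈ Set.Icc (0:ℝ) l₂, HasDerivAt φ₂' (φ₂'' x) x)
    (hode₁ : ∀ x ∈ Set.Icc (0:ℝ) l₁, -D * φ₁'' x + α * φ₁' x = lam₁ * φ₁ x)
    (hode₂ : ∀ x ∈ Set.Icc (0:ℝ) l₂, -D * φ₂'' x + α * φ₂' x = lam₂ * φ₂ x)
    (hb₁ : φ₁' 0 = 0) (hb₂ : φ₂' 0 = 0)
    (hz₁ : φ₁ l₁ = 0)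
    (hp₁ : ∀ x ∈ Set.Ico (0:ℝ) l₁, 0 < φ₁ x)
    (hp₂ : ∀ x ∈ Set.Ico (0:ℝ) l₂, 0 < φ₂ x)
    (hHopf : φ₁' l₁ < 0) :
    lam₂ < lam₁ := by
  by_contra! hle
  have hsub : Icc 0 l₁ ⊆ Icc 0 l₂ := Icc_subset_Icc_right hl₁₂.le
  have hmono := monotoneOn_weightedWronskian hD hle hd₁ hd₁' (fun x hx => hd₂ x (hsub hx))
    (fun x hx => hd₂' x (hsub hx)) hode₁ (fun x hx => hode₂ x (hsub hx))
    (fun x hx => (hp₁ x (Ioo_subset_Ico_self hx)).le)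
    (fun x hx => (hp₂ x ⟨hx.1.le, hx.2.trans hl₁₂⟩).le)
  have hW₀ : weightedWronskian (α / D) φ₁ φ₁' φ₂ φ₂' 0 = 0 := by
    simp [weightedWronskian, hb₁, hb₂]
  have hW₁ : weightedWronskian (α / D) φ₁ φ₁' φ₂ φ₂' l₁ < 0 := by
    rw [weightedWronskian, hz₁, zero_mul, sub_zero]
    exact mul_neg_of_pos_of_neg (exp_pos _) (mul_neg_of_neg_of_pos hHopf (hp₂ l₁ ⟨hl₁.le, hl₁₂⟩))
  have := hmono (left_mem_Icc.2 hl₁.le) (right_mem_Icc.2 hl₁.le) hl₁.le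
  linarith

theorem stmt_3 (D α l₁ l₂ lam₁ lam₂ : ℝ) (φ₁ φ₂ φ₁' φ₂' φ₁'' φ₂'' : ℝ → ℝ)
    (hD : 0 < D) (hl₁ : 0 < l₁) (hl₁₂ : l₁ < l₂)
    (hd₁ : ∀ x ∈ Set.Icc (0:ℝ) l₁, HasDerivAt φ₁ (φ₁' x) x)
    (hd₁' : ∀ x ∈ Set.Icc (0:ℝ) l₁, HasDerivAt φ₁' (φ₁'' x) x)
    (hd₂ : ∀ x ∈ Set.Icc (0:ℝ) l₂, HasDerivAt φ₂ (φ₂' x) x)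
    (hd₂' : ∀ x ∈ Set.Icc (0:ℝ) l₂, HasDerivAt φ₂' (φ₂'' x) x)
    (hc₁ : ContinuousOn φ₁'' (Set.Icc (0:ℝ) l₁))
    (hc₂ : ContinuousOn φ₂'' (Set.Icc (0:ℝ) l₂))
    (hode₁ : ∀ x ∈ Set.Icc (0:ℝ) l₁, -D * φ₁'' x + α * φ₁' x = lam₁ * φ₁ x)
    (hode₂ : ∀ x ∈ Set.Icc (0:ℝ) l₂, -D * φ₂'' x + α * φ₂' x = lam₂ * φ₂ x)
    (hb₁ : φ₁' 0 = 0) (hb₂ : φ₂' 0 = 0)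
    (hz₁ : φ₁ l₁ = 0) (hz₂ : φ₂ l₂ = 0)
    (hp₁ : ∀ x ∈ Set.Ico (0:ℝ) l₁, 0 < φ₁ x)
    (hp₂ : ∀ x ∈ Set.Ico (0:ℝ) l₂, 0 < φ₂ x)
    (hHopf : φ₁' l₁ < 0) :
    lam₂ < lam₁ :=
  stmt_3_general D α l₁ l₂ lam₁ lam₂ φ₁ φ₂ φ₁' φ₂' φ₁'' φ₂'' hD hl₁ hl₁₂ hd₁ hd₁' hd₂ hd₂' hode₁
    hode₂ hb₁ hb₂ hz₁ hp₁ hp₂ hHopf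
end

section
/- Let D > 0, l > 0 and α ∈ ℝ. There exists z with 0 < z < |α| and e^{(l/D)z} = (α + z)/(α − z) if and only if α > 2D/l; moreover, when α > 2D/l, such z is unique. -/
/-!
For `α ≤ 0` the right-hand side is below `1 < exp (c z)`, `c = l / D`. For `α > 0` take logarithms:
the roots are the zeros in `(0, α)` of `G = logMismatch c α`, which vanishes at
`0`, has `G' z = 2 α / (α² - z²) - c` strictly increasing on `[0, α)`, and tends to `+∞` at `α`.
If `c α ≤ 2` then `G' > 0` on `(0, α)`, so `G > 0` there. If `c α > 2` then `G` is negative near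
`0` and positive near `α`, so it has a zero, and strict convexity allows no zero besides it and `0`.
-/

open Real Set

noncomputable def logMismatch (c α z : ℝ) : ℝ := log (α + z) - log (α - z) - c * z

def IsAdmissibleRoot (c α z : ℝ) : Prop :=
  0 < z ∧ z < |α| ∧ exp (c * z) = (α + z) / (α - z)

section logMismatch

variable {c α z : ℝ}

@[simp]
lemma logMismatch_zero (c α : ℝ) : logMismatch c α 0 = 0 := by simp [logMismatch]

lemma hasDerivAt_logMismatch (hz : z ∈ Ioo (-α) α) :
    HasDerivAt (logMismatch c α) (2 * α / (α ^ 2 - z ^ 2) - c) z := by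
  have hp : α + z ≠ 0 := by linarith [hz.1]
  have hm : α - z ≠ 0 := by linarith [hz.2]
  have h := ((((hasDerivAt_id z).const_add α).log hp).sub
    (((hasDerivAt_id z).const_sub α).log hm)).sub ((hasDerivAt_id z).const_mul c)
  refine h.congr_deriv ?_
  have hsq : α ^ 2 - z ^ 2 = (α + z) * (α - z) := by ring
  rw [hsq, id]
  field_simp
  ring

lemma continuousOn_logMismatch (hα : 0 < α) : ContinuousOn (logMismatch c α) (Ico 0 α) :=
  fun _ hz ↦ (hasDerivAt_logMismatch ⟨by linarith [hz.1], hz.2⟩).continuousAt.continuousWithinAt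

lemma deriv_logMismatch (hz : z ∈ Ioo 0 α) :
    deriv (logMismatch c α) z = 2 * α / (α ^ 2 - z ^ 2) - c :=
  (hasDerivAt_logMismatch ⟨by linarith [hz.1, hz.2], hz.2⟩).deriv

lemma strictConvexOn_logMismatch (hα : 0 < α) :
    StrictConvexOn ℝ (Ico 0 α) (logMismatch c α) := by
  refine StrictMonoOn.strictConvexOn_of_deriv (convex_Ico 0 α) (continuousOn_logMismatch hα) ?_
  rw [interior_Ico]
  intro x hx y hy hxy
  rw [deriv_logMismatch hx, deriv_logMismatch hy, sub_lt_sub_iff_right]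
  exact div_lt_div_of_pos_left (by positivity) (by nlinarith [hy.1, hy.2])
    (by nlinarith [hx.1, hx.2])

lemma logMismatch_pos_of_mul_le_two (hα : 0 < α) (hcα : c * α ≤ 2) (hz : z ∈ Ioo 0 α) :
    0 < logMismatch c α z := by
  have hmono : StrictMonoOn (logMismatch c α) (Ico 0 α) := by
    refine strictMonoOn_of_deriv_pos (convex_Ico 0 α) (continuousOn_logMismatch hα) ?_
    rw [interior_Ico]
    intro x hx
    have hc : c ≤ 2 * α / α ^ 2 := by
      rw [le_div_iff₀ (by positivity)]
      nlinarith
    have : 2 * α / α ^ 2 < 2 * α / (α ^ 2 - x ^ 2) :=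
      div_lt_div_of_pos_left (by positivity) (by nlinarith [hx.1, hx.2]) (by nlinarith [hx.1])
    rw [deriv_logMismatch hx]
    linarith
  simpa using hmono (left_mem_Ico.2 hα) (Ioo_subset_Ico_self hz) hz.1

lemma logMismatch_eq_zero_iff (hz : z ∈ Ioo (-α) α) :
    logMismatch c α z = 0 ↔ exp (c * z) = (α + z) / (α - z) := by
  have hp : 0 < α + z := by linarith [hz.1]
  have hm : 0 < α - z := by linarith [hz.2]
  rw [logMismatch, ← log_div hp.ne' hm.ne', sub_eq_zero, eq_comm,
    ← exp_eq_exp, exp_log (div_pos hp hm)]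

lemma exists_logMismatch_neg (hc : 0 < c) (hcα : 2 < c * α) :
    ∃ z ∈ Ioo 0 α, logMismatch c α z < 0 := by
  have hα : 0 < α := by nlinarith
  set z := α / 2 - 1 / c with hz_def
  have hcz : c * z = c * α / 2 - 1 := by rw [hz_def]; field_simp
  have hz : z ∈ Ioo 0 α := by
    constructor
    · nlinarith
    · have : 0 < 1 / c := by positivity
      linarith
  have hp : 0 < α + z := by linarith [hz.1]
  have hm : 0 < α - z := by linarith [hz.2]
  -- the witness makes `c α - 2 - c z = c z`, whence `(α + z) / (α - z) < 1 + c z`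
  have hratio : (α + z) / (α - z) < exp (c * z) := by
    have hcz_pos : 0 < c * z := mul_pos hc hz.1
    calc (α + z) / (α - z) < c * z + 1 := by
          rw [div_lt_iff₀ hm]
          nlinarith [mul_pos hz.1 hcz_pos]
      _ ≤ exp (c * z) := add_one_le_exp _
  refine ⟨z, hz, ?_⟩
  rw [logMismatch, ← log_div hp.ne' hm.ne', sub_neg, log_lt_iff_lt_exp (div_pos hp hm)]
  exact hratio

lemma exists_logMismatch_pos (hc : 0 < c) (hα : 0 < α) :
    ∃ z ∈ Ioo 0 α, 0 < logMismatch c α z := by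
  -- at `z = α (1 - exp (-c α))` we have `log (α - z) = log α - c α`
  have hexp : exp (-(c * α)) < 1 := exp_lt_one_iff.2 (by nlinarith)
  set z := α - α * exp (-(c * α)) with hz_def
  have hz : z ∈ Ioo 0 α := ⟨by nlinarith, by nlinarith [exp_pos (-(c * α))]⟩
  have hm : log (α - z) = log α - c * α := by
    rw [hz_def, sub_sub_cancel, log_mul hα.ne' (exp_pos _).ne', log_exp]
    ring
  have hp : log α < log (α + z) := log_lt_log hα (by linarith [hz.1])
  refine ⟨z, hz, ?_⟩
  rw [logMismatch, hm]
  nlinarith [hz.2]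

lemma exists_logMismatch_eq_zero (hc : 0 < c) (hcα : 2 < c * α) :
    ∃ z ∈ Ioo 0 α, logMismatch c α z = 0 := by
  have hα : 0 < α := by nlinarith
  obtain ⟨a, ha, hfa⟩ := exists_logMismatch_neg hc hcα
  obtain ⟨b, hb, hfb⟩ := exists_logMismatch_pos hc hα
  exact isPreconnected_Ioo.intermediate_value ha hb
    ((continuousOn_logMismatch hα).mono Ioo_subset_Ico_self) ⟨hfa.le, hfb.le⟩

end logMismatch

lemma StrictConvexOn.eq_of_apply_eq_of_lt {s : Set ℝ} {f : ℝ → ℝ} (hf : StrictConvexOn ℝ s f)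
    {a x y : ℝ} (ha : a ∈ s) (hx : x ∈ s) (hy : y ∈ s) (hax : a < x) (hay : a < y)
    (hfx : f x = f a) (hfy : f y = f a) : x = y := by
  wlog hxy : x < y generalizing x y
  · rcases (not_lt.1 hxy).lt_or_eq with h | h
    · exact (this hy hx hay hax hfy hfx h).symm
    · exact h.symm
  have := hf.lt_on_openSegment ha hy hay.ne (by rw [openSegment_eq_Ioo hay]; exact ⟨hax, hxy⟩)
  simp [hfx, hfy] at this

section IsAdmissibleRoot

variable {c α z : ℝ}

lemma isAdmissibleRoot_iff (hα : 0 < α) :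
    IsAdmissibleRoot c α z ↔ z ∈ Ioo 0 α ∧ logMismatch c α z = 0 := by
  rw [IsAdmissibleRoot, abs_of_pos hα, ← and_assoc]
  refine and_congr_right fun hz ↦ (logMismatch_eq_zero_iff ⟨by linarith [hz.1], hz.2⟩).symm

lemma not_isAdmissibleRoot_of_nonpos (hc : 0 < c) (hα : α ≤ 0) : ¬IsAdmissibleRoot c α z := by
  rintro ⟨hz, hzα, heq⟩
  rw [abs_of_nonpos hα] at hzα
  have hratio : (α + z) / (α - z) < 1 := (div_lt_one_of_neg (by linarith)).2 (by linarith)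
  have hexp : 1 < exp (c * z) := one_lt_exp_iff.2 (mul_pos hc hz)
  linarith

lemma IsAdmissibleRoot.two_lt_mul (hc : 0 < c) (h : IsAdmissibleRoot c α z) : 2 < c * α := by
  by_contra! hcα
  rcases le_or_gt α 0 with hα | hα
  · exact not_isAdmissibleRoot_of_nonpos hc hα h
  · obtain ⟨hz, hzero⟩ := (isAdmissibleRoot_iff hα).1 h
    exact (logMismatch_pos_of_mul_le_two hα hcα hz).ne' hzero

lemma existsUnique_isAdmissibleRoot (hc : 0 < c) (hcα : 2 < c * α) :
    ∃! z, IsAdmissibleRoot c α z := by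
  have hα : 0 < α := by nlinarith
  simp only [isAdmissibleRoot_iff hα]
  obtain ⟨z, hz, hzero⟩ := exists_logMismatch_eq_zero hc hcα
  refine ⟨z, ⟨hz, hzero⟩, fun w ⟨hw, hwzero⟩ ↦ ?_⟩
  -- `0` is a third zero of the strictly convex `logMismatch c α`
  exact (strictConvexOn_logMismatch hα).eq_of_apply_eq_of_lt (left_mem_Ico.2 hα)
    (Ioo_subset_Ico_self hw) (Ioo_subset_Ico_self hz) hw.1 hz.1
    (by rw [hwzero, logMismatch_zero]) (by rw [hzero, logMismatch_zero])

end IsAdmissibleRoot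

theorem stmt_7 (D l α : ℝ) (hD : 0 < D) (hl : 0 < l) :
    ((∃ z : ℝ, 0 < z ∧ z < |α| ∧
        Real.exp (l / D * z) = (α + z) / (α - z)) ↔ 2 * D / l < α) ∧
    (2 * D / l < α → ∃! z : ℝ, 0 < z ∧ z < |α| ∧
        Real.exp (l / D * z) = (α + z) / (α - z)) := by
  have hc : 0 < l / D := div_pos hl hD
  have hα : 2 * D / l < α ↔ 2 < l / D * α := by
    rw [div_lt_iff₀ hl, div_mul_eq_mul_div, lt_div_iff₀ hD, mul_comm α l]
  change ((∃ z, IsAdmissibleRoot (l / D) α z) ↔ _) ∧ (_ → ∃! z, IsAdmissibleRoot (l / D) α z)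
  exact ⟨⟨fun ⟨_, hz⟩ ↦ hα.2 (hz.two_lt_mul hc),
    fun h ↦ (existsUnique_isAdmissibleRoot hc (hα.1 h)).exists⟩,
    fun h ↦ existsUnique_isAdmissibleRoot hc (hα.1 h)⟩
end

section
/- Let D > 0, l > 0, α ∈ ℝ with α ≠ 0, and let z > 0 satisfy tan(lz/(2D)) = z/α. Define φ(x) = e^{(α/(2D))x} ( cos((z/(2D))x) − (α/z) sin((z/(2D))x) ). Then φ satisfies −D φ''(x) + α φ'(x) = ((α² + z²)/(4D)) φ(x) for all x ∈ ℝ, φ'(0) = 0, and φ(l) = 0. Moreover, if in addition α > 0 and z < πD/l, then φ(x) > 0 for all x ∈ [0, l). -/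
/-!
Writing `a = α/(2D)` and `k = z/(2D)`, the equation becomes `φ'' - 2aφ' + (a² + k²)φ = 0`, whose
characteristic roots are `a ± ik`; `φ` is the solution with `φ(0) = 1`, `φ'(0) = 0`, and
`φ' = -((a² + k²)/k) e^{ax} sin(kx)`. The condition `tan(kl) = k/a` says exactly that `φ(l) = 0`.
For positivity, `cos(kx) - (a/k) sin(kx) = cos(kx) (1 - (a/k) tan(kx))` on `[0, l)`, where
`0 ≤ kx < kl < π/2`, and `tan(kx) < tan(kl) = k/a` because `tan` is increasing there.
-/

open Real

noncomputable def expCosProfile (a k : ℝ) (x : ℝ) : ℝ :=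
  exp (a * x) * (cos (k * x) - a / k * sin (k * x))

section ExpCosProfile

variable {a k l x : ℝ}

theorem hasDerivAt_exp_mul_sin (a k x : ℝ) :
    HasDerivAt (fun x => exp (a * x) * sin (k * x))
      (exp (a * x) * (a * sin (k * x) + k * cos (k * x))) x := by
  have hexp := ((hasDerivAt_id x).const_mul a).exp
  have hsin := ((hasDerivAt_id x).const_mul k).sin
  exact (hexp.mul hsin).congr_deriv (by simp only [id]; ring)

theorem hasDerivAt_expCosProfile (a : ℝ) (hk : k ≠ 0) (x : ℝ) :
    HasDerivAt (expCosProfile a k) (-((a ^ 2 + k ^ 2) / k) * (exp (a * x) * sin (k * x))) x := by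
  have hexp := ((hasDerivAt_id x).const_mul a).exp
  have hcos := ((hasDerivAt_id x).const_mul k).cos
  have hsin := (((hasDerivAt_id x).const_mul k).sin).const_mul (a / k)
  exact (hexp.mul (hcos.sub hsin)).congr_deriv (by simp only [id, Pi.sub_apply]; field_simp; ring)

theorem deriv_expCosProfile (a : ℝ) (hk : k ≠ 0) :
    deriv (expCosProfile a k) = fun x => -((a ^ 2 + k ^ 2) / k) * (exp (a * x) * sin (k * x)) :=
  funext fun x => (hasDerivAt_expCosProfile a hk x).deriv

theorem deriv_expCosProfile_zero (a : ℝ) (hk : k ≠ 0) : deriv (expCosProfile a k) 0 = 0 := by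
  simp [deriv_expCosProfile a hk]

theorem expCosProfile_ode (a : ℝ) (hk : k ≠ 0) (x : ℝ) :
    deriv (deriv (expCosProfile a k)) x - 2 * a * deriv (expCosProfile a k) x
      + (a ^ 2 + k ^ 2) * expCosProfile a k x = 0 := by
  have h2 : deriv (deriv (expCosProfile a k)) x
      = -((a ^ 2 + k ^ 2) / k) * (exp (a * x) * (a * sin (k * x) + k * cos (k * x))) := by
    rw [deriv_expCosProfile a hk]
    exact ((hasDerivAt_exp_mul_sin a k x).const_mul _).deriv
  rw [h2, deriv_expCosProfile a hk, expCosProfile]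
  field_simp
  ring

theorem expCosProfile_eq_zero_of_tan (ha : a ≠ 0) (hk : k ≠ 0) (htan : tan (k * l) = k / a) :
    expCosProfile a k l = 0 := by
  have hcos : cos (k * l) ≠ 0 := by
    intro h
    rw [tan_eq_sin_div_cos, h, div_zero, eq_comm] at htan
    exact div_ne_zero hk ha htan
  have hsin : sin (k * l) = k / a * cos (k * l) := by
    rw [← htan, tan_eq_sin_div_cos, div_mul_cancel₀ _ hcos]
  rw [expCosProfile, hsin]
  field_simp
  ring

theorem expCosProfile_pos (ha : 0 < a) (hk : 0 < k) (hkl : k * l < π / 2)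
    (htan : tan (k * l) = k / a) (hx₀ : 0 ≤ x) (hxl : x < l) : 0 < expCosProfile a k x := by
  have hkx : k * x < k * l := mul_lt_mul_of_pos_left hxl hk
  have hkx₀ : 0 ≤ k * x := by positivity
  have hcos : 0 < cos (k * x) := cos_pos_of_mem_Ioo ⟨by linarith [pi_pos], by linarith⟩
  have htan_lt : tan (k * x) < k / a :=
    htan ▸ tan_lt_tan_of_lt_of_lt_pi_div_two (by linarith [pi_pos]) hkl hkx
  have hfactor : a / k * tan (k * x) < 1 := by
    calc a / k * tan (k * x) < a / k * (k / a) := mul_lt_mul_of_pos_left htan_lt (by positivity)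
      _ = 1 := by field_simp
  have hbracket : 0 < cos (k * x) - a / k * sin (k * x) := by
    have hsin : sin (k * x) = tan (k * x) * cos (k * x) := by
      rw [tan_eq_sin_div_cos, div_mul_cancel₀ _ hcos.ne']
    rw [hsin]
    nlinarith
  exact mul_pos (exp_pos _) hbracket

end ExpCosProfile

theorem stmt_10 (D l α z : ℝ) (φ : ℝ → ℝ)
    (hD : 0 < D) (hl : 0 < l) (hα : α ≠ 0) (hz : 0 < z)
    (htan : Real.tan (l * z / (2 * D)) = z / α)
    (hφ : ∀ x, φ x = Real.exp (α / (2 * D) * x) *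
      (Real.cos (z / (2 * D) * x) - α / z * Real.sin (z / (2 * D) * x))) :
    (∀ x : ℝ, -D * deriv (deriv φ) x + α * deriv φ x
        = (α ^ 2 + z ^ 2) / (4 * D) * φ x) ∧
    deriv φ 0 = 0 ∧ φ l = 0 ∧
    (0 < α → z < Real.pi * D / l → ∀ x ∈ Set.Ico (0:ℝ) l, 0 < φ x) := by
  set a := α / (2 * D) with ha
  set k := z / (2 * D) with hk
  have hk₀ : 0 < k := by positivity
  have hφ_eq : φ = expCosProfile a k := funext fun x => by
    rw [hφ, expCosProfile, show α / z = a / k by rw [ha, hk]; field_simp]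
  have htan' : tan (k * l) = k / a := by
    rw [show k * l = l * z / (2 * D) by ring, htan, ha, hk]
    field_simp
  subst hφ_eq
  refine ⟨fun x => ?_, deriv_expCosProfile_zero a hk₀.ne',
    expCosProfile_eq_zero_of_tan (by positivity) hk₀.ne' htan', fun hα₀ hzl x hx =>
      expCosProfile_pos (by positivity) hk₀ ?_ htan' hx.1 hx.2⟩
  · have hα' : α = D * (2 * a) := by rw [ha]; field_simp
    have heigen : (α ^ 2 + z ^ 2) / (4 * D) = D * (a ^ 2 + k ^ 2) := by
      rw [ha, hk]
      field_simp
      ring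
    linear_combination (-D) * expCosProfile_ode a hk₀.ne' x
      + deriv (expCosProfile a k) x * hα' - expCosProfile a k x * heigen
  · rw [lt_div_iff₀ hl] at hzl
    rw [hk, div_mul_eq_mul_div, div_lt_div_iff₀ (by positivity) two_pos]
    linarith
end

section
/- Let τ > 0, let ε : ℝ → ℝ be continuous with ∫₀^τ ε(t) dt = 0, and let H : [0, ∞) → ℝ satisfy H(0) = 0, be differentiable at 0 with H'(0) > 0, satisfy H(v) > 0 for v > 0, and have v ↦ H(v)/v nonincreasing on (0, ∞). Suppose V : (0, τ] → (0, ∞) is continuous on (0, τ], differentiable on (0, τ) with V'(t) = V(t)(1 + ε(t) − V(t)) for all t ∈ (0, τ), and the right-limit of V at 0 equals H(V(τ)). Then (1/τ) ∫₀^τ V(t) dt ≤ 1 + (1/τ) ln H'(0). -/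
open MeasureTheory intervalIntegral Set Filter Topology

theorem stmt_14 (τ d : ℝ) (ε V H : ℝ → ℝ)
    (hτ : 0 < τ) (hε : Continuous ε) (hεint : (∫ t in (0:ℝ)..τ, ε t) = 0)
    (hH0 : H 0 = 0)
    (hHd : HasDerivWithinAt H d (Set.Ici 0) 0) (hd : 0 < d)
    (hHpos : ∀ v : ℝ, 0 < v → 0 < H v)
    (hHmono : ∀ u v : ℝ, 0 < u → u ≤ v → H v / v ≤ H u / u)
    (hVcont : ContinuousOn V (Set.Ioc 0 τ))
    (hVpos : ∀ t ∈ Set.Ioc (0:ℝ) τ, 0 < V t)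
    (hVderiv : ∀ t ∈ Set.Ioo (0:ℝ) τ,
      HasDerivAt V (V t * (1 + ε t - V t)) t)
    (hVlim : Filter.Tendsto V (nhdsWithin (0:ℝ) (Set.Ioi 0)) (nhds (H (V τ)))) :
    (1 / τ) * ∫ t in (0:ℝ)..τ, V t ≤ 1 + (1 / τ) * Real.log d := by
  have hVτ : 0 < V τ := hVpos τ ⟨hτ, le_refl τ⟩
  set L := H (V τ) with hLdef
  have hL : 0 < L := hHpos _ hVτ
  -- Step 1: H(Vτ)/Vτ ≤ d
  have hslope : Tendsto (fun u => H u / u) (𝓝[>] (0:ℝ)) (𝓝 d) := by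
    have h := hasDerivWithinAt_iff_tendsto_slope.mp hHd
    rw [Set.Ici_sdiff_left] at h
    refine h.congr fun u => ?_
    simp [slope_def_field, hH0]
  have hratio : L / V τ ≤ d := by
    refine ge_of_tendsto hslope ?_
    filter_upwards [Ioc_mem_nhdsGT hVτ] with u hu
    exact hHmono u (V τ) hu.1 hu.2
  -- Step 2: extend V continuously to [0, τ]
  set g : ℝ → ℝ := fun t => if 0 < t then V t else L with hgdef
  have hg_eq : EqOn V g (Ioc 0 τ) := fun t ht => by simp [hgdef, ht.1]
  have hgcont : ContinuousOn g (Icc 0 τ) := by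
    intro x hx
    rcases eq_or_lt_of_le hx.1 with h0 | h0
    · -- x = 0
      subst h0
      have hg0 : g 0 = L := by simp [hgdef]
      rw [ContinuousWithinAt, hg0]
      have : Icc (0:ℝ) τ = {0} ∪ Ioc 0 τ := by
        rw [← Icc_union_Ioc_eq_Icc le_rfl hτ.le, Icc_self]
      rw [this, nhdsWithin_union]
      refine Tendsto.sup ?_ ?_
      · rw [nhdsWithin_singleton]
        exact hg0 ▸ tendsto_pure_nhds g 0
      · rw [nhdsWithin_Ioc_eq_nhdsGT hτ]
        refine hVlim.congr' ?_
        filter_upwards [self_mem_nhdsWithin] with t (ht : t ∈ Ioi 0)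
        simp [hgdef, ht.out]
    · -- x > 0
      have hx' : x ∈ Ioc 0 τ := ⟨h0, hx.2⟩
      have h1 : ContinuousWithinAt V (Ioc 0 τ) x := hVcont x hx'
      have hnn : 𝓝[Icc 0 τ] x = 𝓝[Ioc 0 τ] x := by
        have hmem : Ioi (0:ℝ) ∈ 𝓝 x := Ioi_mem_nhds h0
        have hset : Icc 0 τ ∩ Ioi 0 = Ioc 0 τ := by
          ext t
          simp only [mem_inter_iff, mem_Icc, mem_Ioi, mem_Ioc]
          constructor
          · rintro ⟨ht, ht'⟩; exact ⟨ht', ht.2⟩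
          · rintro ⟨ht, ht'⟩; exact ⟨⟨le_of_lt ht, ht'⟩, ht⟩
        rw [nhdsWithin_restrict' (Icc 0 τ) hmem, hset]
      have hgx : g x = V x := (hg_eq hx').symm
      rw [ContinuousWithinAt, hnn, hgx]
      exact h1.congr' (by
        filter_upwards [self_mem_nhdsWithin] with t ht
        exact hg_eq ht)
  -- Step 3: FTC and limiting argument
  set f : ℝ → ℝ := fun t => 1 + ε t - g t with hfdef
  have hfcont : ContinuousOn f (Icc 0 τ) :=
    (continuousOn_const.add hε.continuousOn).sub hgcont
  have hVint : (∫ t in (0:ℝ)..τ, V t) = ∫ t in (0:ℝ)..τ, g t := by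
    rw [integral_of_le hτ.le, integral_of_le hτ.le]
    exact setIntegral_congr_fun measurableSet_Ioc hg_eq
  have key : ∀ a ∈ Ioc (0:ℝ) τ,
      (∫ t in a..τ, f t) = Real.log (V τ) - Real.log (V a) := by
    intro a ha
    have hsub : Icc a τ ⊆ Ioc 0 τ := fun t ht => ⟨lt_of_lt_of_le ha.1 ht.1, ht.2⟩
    have hWcont : ContinuousOn (fun t => Real.log (V t)) (Icc a τ) :=
      ContinuousOn.log (hVcont.mono hsub) (fun t ht => (hVpos t (hsub ht)).ne')
    have hW : ∀ x ∈ Ioo a τ,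
        HasDerivWithinAt (fun t => Real.log (V t)) (1 + ε x - V x) (Ioi x) x := by
      intro x hx
      have hx' : x ∈ Ioo 0 τ := ⟨lt_trans ha.1 hx.1, hx.2⟩
      have hVx : V x ≠ 0 := (hVpos x (Ioo_subset_Ioc_self hx')).ne'
      have hder := (hVderiv x hx').log hVx
      rw [mul_comm, mul_div_assoc, div_self hVx, mul_one] at hder
      exact hder.hasDerivWithinAt
    have hfint : IntervalIntegrable (fun t => 1 + ε t - V t) volume a τ := by
      apply ContinuousOn.intervalIntegrable
      rw [uIcc_of_le ha.2]
      exact (continuousOn_const.add hε.continuousOn).sub (hVcont.mono hsub)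
    have hFTC := integral_eq_sub_of_hasDeriv_right_of_le ha.2 hWcont hW hfint
    rw [← hFTC]
    apply integral_congr
    intro t ht
    rw [uIcc_of_le ha.2] at ht
    show 1 + ε t - g t = 1 + ε t - V t
    rw [← hg_eq (hsub ht)]
  have hfint0 : IntegrableOn f (uIcc 0 τ) volume := by
    rw [uIcc_of_le hτ.le]; exact hfcont.integrableOn_Icc
  have hΦ : Tendsto (fun a => ∫ t in a..τ, f t) (𝓝[>] (0:ℝ))
      (𝓝 (∫ t in (0:ℝ)..τ, f t)) := by
    have hc := intervalIntegral.continuousOn_primitive_interval_left hfint0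
    have h0mem : (0:ℝ) ∈ uIcc 0 τ := left_mem_uIcc
    have ht := hc 0 h0mem
    rw [ContinuousWithinAt, uIcc_of_le hτ.le] at ht
    refine ht.mono_left ?_
    rw [← nhdsWithin_Ioc_eq_nhdsGT hτ]
    exact nhdsWithin_mono 0 Ioc_subset_Icc_self
  have hG : Tendsto (fun a => Real.log (V τ) - Real.log (V a)) (𝓝[>] (0:ℝ))
      (𝓝 (Real.log (V τ) - Real.log L)) :=
    tendsto_const_nhds.sub ((Real.continuousAt_log hL.ne').tendsto.comp hVlim)
  have heq : (∫ t in (0:ℝ)..τ, f t) = Real.log (V τ) - Real.log L := by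
    refine tendsto_nhds_unique (hΦ.congr' ?_) hG
    filter_upwards [Ioc_mem_nhdsGT hτ] with a ha
    exact key a ha
  have hsplit : (∫ t in (0:ℝ)..τ, f t)
      = τ + (∫ t in (0:ℝ)..τ, ε t) - ∫ t in (0:ℝ)..τ, g t := by
    have h1 : IntervalIntegrable (fun t => 1 + ε t) volume 0 τ :=
      (continuous_const.add hε).intervalIntegrable 0 τ
    have h2 : IntervalIntegrable g volume 0 τ := by
      rw [intervalIntegrable_iff_integrableOn_Ioc_of_le hτ.le]
      exact hgcont.integrableOn_Icc.mono_set Ioc_subset_Icc_self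
    show (∫ t in (0:ℝ)..τ, ((fun t => 1 + ε t) t - g t))
      = τ + (∫ t in (0:ℝ)..τ, ε t) - ∫ t in (0:ℝ)..τ, g t
    rw [integral_sub h1 h2,
      integral_add intervalIntegrable_const (hε.intervalIntegrable 0 τ)]
    simp
  -- Step 4: conclude
  have h3 : (∫ t in (0:ℝ)..τ, g t) = τ + Real.log (L / V τ) := by
    rw [Real.log_div hL.ne' hVτ.ne']
    rw [heq, hεint] at hsplit
    linarith
  have hlog : Real.log (L / V τ) ≤ Real.log d :=
    (Real.log_le_log_iff (div_pos hL hVτ) hd).mpr hratio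
  have hfin : (∫ t in (0:ℝ)..τ, V t) ≤ τ + Real.log d := by
    rw [hVint, h3]; linarith
  have hτ' : (0:ℝ) < 1 / τ := by positivity
  calc (1/τ) * ∫ t in (0:ℝ)..τ, V t ≤ (1/τ) * (τ + Real.log d) :=
        mul_le_mul_of_nonneg_left hfin hτ'.le
    _ = 1 + (1/τ) * Real.log d := by
        rw [mul_add, one_div_mul_cancel hτ.ne']
end

section
/- Let τ > 0, γ > 0, g > 0 and let a : ℝ → ℝ be continuous. There exists a function w : (0, τ] → (0, ∞), continuous on (0, τ], differentiable on (0, τ) with w'(t) = γ w(t)(a(t) − w(t)) for all t ∈ (0, τ), whose right-limit at 0 exists and equals g · w(τ), if and only if ln g + γ ∫₀^τ a(t) dt > 0. Moreover, when it exists, such a function is unique. -/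
/-!
With the integrating factor `E t = exp (γ ∫₀ᵗ a)` (`logisticFactor γ a`), the substitution
`v = E / w` turns the logistic equation `w' = γ w (a - w)` into the linear equation `v' = γ E`.
Hence every solution is `w = E / (c + B)` with `B t = ∫₀ᵗ γ E` (`logisticFactorIntegral γ a`)
and `c = v(0⁺) = 1 / (g w(τ))`, and evaluating at `τ` turns the pulse condition into
`c (g E(τ) - 1) = B(τ)`. As `B(τ) > 0`, a constant `c > 0` exists iff `g E(τ) > 1`, i.e.
`ln g + γ ∫₀^τ a > 0`, and it is then unique.
-/

open Real Set Filter Topology intervalIntegral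

/-- A positive solution of the impulsive periodic logistic equation
`w' = γ w (a - w)` on `(0, τ)`, positive and continuous on `(0, τ]`,
whose right-limit at `0` equals `g · w(τ)` (linear pulse). -/
def IsPeriodicPulseLogisticSolution (τ γ g : ℝ) (a w : ℝ → ℝ) : Prop :=
  ContinuousOn w (Set.Ioc 0 τ) ∧
  (∀ t ∈ Set.Ioc (0:ℝ) τ, 0 < w t) ∧
  (∀ t ∈ Set.Ioo (0:ℝ) τ, HasDerivAt w (γ * w t * (a t - w t)) t) ∧
  Filter.Tendsto w (nhdsWithin (0:ℝ) (Set.Ioi 0)) (nhds (g * w τ))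

noncomputable def logisticFactor (γ : ℝ) (a : ℝ → ℝ) (t : ℝ) : ℝ :=
  exp (γ * ∫ s in (0 : ℝ)..t, a s)

noncomputable def logisticFactorIntegral (γ : ℝ) (a : ℝ → ℝ) (t : ℝ) : ℝ :=
  ∫ s in (0 : ℝ)..t, γ * logisticFactor γ a s

theorem eqOn_Ioc_of_hasDerivAt_zero_of_tendsto {F : ℝ → ℝ} {s τ L : ℝ} (hsτ : s < τ)
    (hF : ContinuousOn F (Ioc s τ)) (hF' : ∀ t ∈ Ioo s τ, HasDerivAt F 0 t)
    (hL : Tendsto F (𝓝[>] s) (𝓝 L)) : ∀ t ∈ Ioc s τ, F t = L := by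
  have hconst : ∀ t ∈ Ioc s τ, F t = F τ := fun t ht =>
    (constant_of_has_deriv_right_zero (hF.mono (Icc_subset_Ioc ht.1 le_rfl))
      (fun x hx => (hF' x ⟨ht.1.trans_le hx.1, hx.2⟩).hasDerivWithinAt) τ
      ⟨ht.2, le_rfl⟩).symm
  have hτL : F τ = L := by
    refine tendsto_nhds_unique (tendsto_const_nhds.congr' ?_) hL
    filter_upwards [Ioo_mem_nhdsGT hsτ] with x hx
    exact (hconst x ⟨hx.1, hx.2.le⟩).symm
  exact fun t ht => (hconst t ht).trans hτL

section LogisticFactor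

variable {γ : ℝ} {a : ℝ → ℝ}

theorem logisticFactor_pos (t : ℝ) : 0 < logisticFactor γ a t := exp_pos _

@[simp]
theorem logisticFactor_zero : logisticFactor γ a 0 = 1 := by
  simp [logisticFactor]

theorem hasDerivAt_logisticFactor (ha : Continuous a) (t : ℝ) :
    HasDerivAt (logisticFactor γ a) (γ * a t * logisticFactor γ a t) t :=
  ((ha.integral_hasStrictDerivAt 0 t).hasDerivAt.const_mul γ).exp.congr_deriv (mul_comm _ _)

theorem continuous_logisticFactor (ha : Continuous a) : Continuous (logisticFactor γ a) :=
  continuous_iff_continuousAt.2 fun t => (hasDerivAt_logisticFactor ha t).continuousAt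

theorem one_lt_mul_logisticFactor_iff {g τ : ℝ} (hg : 0 < g) :
    1 < g * logisticFactor γ a τ ↔ 0 < log g + γ * ∫ t in (0 : ℝ)..τ, a t := by
  rw [← log_pos_iff (mul_pos hg (logisticFactor_pos τ)).le,
    log_mul hg.ne' (logisticFactor_pos τ).ne', logisticFactor, log_exp]

theorem hasDerivAt_logisticFactorIntegral (ha : Continuous a) (t : ℝ) :
    HasDerivAt (logisticFactorIntegral γ a) (γ * logisticFactor γ a t) t :=
  ((continuous_const.mul (continuous_logisticFactor ha)).integral_hasStrictDerivAt 0 t).hasDerivAt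

theorem continuous_logisticFactorIntegral (ha : Continuous a) :
    Continuous (logisticFactorIntegral γ a) :=
  continuous_iff_continuousAt.2 fun t => (hasDerivAt_logisticFactorIntegral ha t).continuousAt

@[simp]
theorem logisticFactorIntegral_zero : logisticFactorIntegral γ a 0 = 0 :=
  integral_same

theorem logisticFactorIntegral_nonneg (hγ : 0 ≤ γ) {t : ℝ} (ht : 0 ≤ t) :
    0 ≤ logisticFactorIntegral γ a t :=
  integral_nonneg ht fun s _ => mul_nonneg hγ (logisticFactor_pos s).le

theorem logisticFactorIntegral_pos (ha : Continuous a) (hγ : 0 < γ) {t : ℝ} (ht : 0 < t) :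
    0 < logisticFactorIntegral γ a t :=
  intervalIntegral_pos_of_pos
    ((continuous_const.mul (continuous_logisticFactor ha)).intervalIntegrable 0 t)
    (fun s => mul_pos hγ (logisticFactor_pos s)) ht

theorem hasDerivAt_logisticFactor_div_sub (ha : Continuous a) {w : ℝ → ℝ} {t : ℝ}
    (hwt : w t ≠ 0) (hw : HasDerivAt w (γ * w t * (a t - w t)) t) :
    HasDerivAt (fun s => logisticFactor γ a s / w s - logisticFactorIntegral γ a s) 0 t := by
  refine (((hasDerivAt_logisticFactor ha t).div hw hwt).sub
    (hasDerivAt_logisticFactorIntegral ha t)).congr_deriv ?_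
  field_simp
  ring

theorem hasDerivAt_logisticFactor_div_add (ha : Continuous a) {c t : ℝ}
    (hct : c + logisticFactorIntegral γ a t ≠ 0) :
    HasDerivAt (fun s => logisticFactor γ a s / (c + logisticFactorIntegral γ a s))
      (γ * (logisticFactor γ a t / (c + logisticFactorIntegral γ a t)) *
        (a t - logisticFactor γ a t / (c + logisticFactorIntegral γ a t))) t := by
  refine ((hasDerivAt_logisticFactor ha t).div
    ((hasDerivAt_logisticFactorIntegral ha t).const_add c) hct).congr_deriv ?_
  field_simp

end LogisticFactor

namespace IsPeriodicPulseLogisticSolution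

variable {τ γ g : ℝ} {a w : ℝ → ℝ}

theorem logisticFactor_div_sub_eq (ha : Continuous a) (hτ : 0 < τ) (hg : g ≠ 0)
    (hw : IsPeriodicPulseLogisticSolution τ γ g a w) :
    ∀ t ∈ Ioc 0 τ, logisticFactor γ a t / w t - logisticFactorIntegral γ a t = (g * w τ)⁻¹ := by
  obtain ⟨hwc, hwpos, hwd, hwlim⟩ := hw
  have hgw : g * w τ ≠ 0 := mul_ne_zero hg (hwpos τ ⟨hτ, le_rfl⟩).ne'
  refine eqOn_Ioc_of_hasDerivAt_zero_of_tendsto hτ ?_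
    (fun t ht => hasDerivAt_logisticFactor_div_sub ha (hwpos t (Ioo_subset_Ioc_self ht)).ne'
      (hwd t ht)) ?_
  · exact ((continuous_logisticFactor ha).continuousOn.div hwc fun t ht => (hwpos t ht).ne').sub
      (continuous_logisticFactorIntegral ha).continuousOn
  · have hE : Tendsto (logisticFactor γ a) (𝓝[>] 0) (𝓝 (logisticFactor γ a 0)) :=
      (continuous_logisticFactor ha).continuousWithinAt
    have hB : Tendsto (logisticFactorIntegral γ a) (𝓝[>] 0) (𝓝 (logisticFactorIntegral γ a 0)) :=
      (continuous_logisticFactorIntegral ha).continuousWithinAt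
    simpa using (hE.div hwlim hgw).sub hB

theorem eq_logisticFactor_div_add (ha : Continuous a) (hτ : 0 < τ) (hg : g ≠ 0)
    (hw : IsPeriodicPulseLogisticSolution τ γ g a w) :
    ∀ t ∈ Ioc 0 τ, w t = logisticFactor γ a t / ((g * w τ)⁻¹ + logisticFactorIntegral γ a t) := by
  intro t ht
  rw [← sub_eq_iff_eq_add.1 (hw.logisticFactor_div_sub_eq ha hτ hg t ht),
    div_div_cancel₀ (logisticFactor_pos t).ne']

theorem inv_mul_sub_one_eq (ha : Continuous a) (hτ : 0 < τ) (hg : g ≠ 0)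
    (hw : IsPeriodicPulseLogisticSolution τ γ g a w) :
    (g * w τ)⁻¹ * (g * logisticFactor γ a τ - 1) = logisticFactorIntegral γ a τ := by
  have h := hw.logisticFactor_div_sub_eq ha hτ hg τ ⟨hτ, le_rfl⟩
  have hwτ : w τ ≠ 0 := (hw.2.1 τ ⟨hτ, le_rfl⟩).ne'
  field_simp at h ⊢
  linear_combination h

theorem one_lt_mul_logisticFactor (ha : Continuous a) (hτ : 0 < τ) (hγ : 0 < γ) (hg : 0 < g)
    (hw : IsPeriodicPulseLogisticSolution τ γ g a w) : 1 < g * logisticFactor γ a τ := by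
  have hc : 0 < (g * w τ)⁻¹ := inv_pos.2 (mul_pos hg (hw.2.1 τ ⟨hτ, le_rfl⟩))
  have h : 0 < (g * w τ)⁻¹ * (g * logisticFactor γ a τ - 1) := by
    rw [hw.inv_mul_sub_one_eq ha hτ hg.ne']
    exact logisticFactorIntegral_pos ha hγ hτ
  exact sub_pos.1 (pos_of_mul_pos_right h hc.le)

end IsPeriodicPulseLogisticSolution

theorem isPeriodicPulseLogisticSolution_logisticFactor_div_add {τ γ g c : ℝ} {a : ℝ → ℝ}
    (ha : Continuous a) (hγ : 0 ≤ γ) (hg : g ≠ 0) (hc : 0 < c)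
    (hcτ : c * (g * logisticFactor γ a τ - 1) = logisticFactorIntegral γ a τ) :
    IsPeriodicPulseLogisticSolution τ γ g a
      (fun t => logisticFactor γ a t / (c + logisticFactorIntegral γ a t)) := by
  have hden : ∀ t ∈ Ioc 0 τ, 0 < c + logisticFactorIntegral γ a t := fun t ht =>
    add_pos_of_pos_of_nonneg hc (logisticFactorIntegral_nonneg hγ ht.1.le)
  refine ⟨?_, fun t ht => div_pos (logisticFactor_pos t) (hden t ht),
    fun t ht => hasDerivAt_logisticFactor_div_add ha (hden t (Ioo_subset_Ioc_self ht)).ne', ?_⟩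
  · exact (continuous_logisticFactor ha).continuousOn.div
      (continuous_const.add (continuous_logisticFactorIntegral ha)).continuousOn
      fun t ht => (hden t ht).ne'
  · have hcont : ContinuousAt
        (fun t => logisticFactor γ a t / (c + logisticFactorIntegral γ a t)) 0 :=
      (continuous_logisticFactor ha).continuousAt.div
        (continuous_const.add (continuous_logisticFactorIntegral ha)).continuousAt
        (by simp [hc.ne'])
    have hEτ := (logisticFactor_pos (γ := γ) (a := a) τ).ne'
    convert hcont.continuousWithinAt.tendsto using 2
    simp only [logisticFactor_zero, logisticFactorIntegral_zero, add_zero, ← hcτ]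
    field_simp
    ring

theorem stmt_18 (τ γ g : ℝ) (a : ℝ → ℝ)
    (hτ : 0 < τ) (hγ : 0 < γ) (hg : 0 < g) (ha : Continuous a) :
    ((∃ w : ℝ → ℝ, IsPeriodicPulseLogisticSolution τ γ g a w) ↔
      0 < Real.log g + γ * ∫ t in (0:ℝ)..τ, a t) ∧
    (∀ w₁ w₂ : ℝ → ℝ, IsPeriodicPulseLogisticSolution τ γ g a w₁ →
      IsPeriodicPulseLogisticSolution τ γ g a w₂ →
      ∀ t ∈ Set.Ioc (0:ℝ) τ, w₁ t = w₂ t) := by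
  rw [← one_lt_mul_logisticFactor_iff hg]
  refine ⟨⟨fun ⟨w, hw⟩ => hw.one_lt_mul_logisticFactor ha hτ hγ hg, fun h => ?_⟩,
    fun w₁ w₂ h₁ h₂ t ht => ?_⟩
  · have hpos : 0 < g * logisticFactor γ a τ - 1 := sub_pos.2 h
    exact ⟨_, isPeriodicPulseLogisticSolution_logisticFactor_div_add ha hγ.le hg.ne'
      (div_pos (logisticFactorIntegral_pos ha hγ hτ) hpos) (div_mul_cancel₀ _ hpos.ne')⟩
  · have hne : g * logisticFactor γ a τ - 1 ≠ 0 :=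
      (sub_pos.2 (h₁.one_lt_mul_logisticFactor ha hτ hγ hg)).ne'
    have hc : (g * w₁ τ)⁻¹ = (g * w₂ τ)⁻¹ := mul_right_cancel₀ hne
      ((h₁.inv_mul_sub_one_eq ha hτ hg.ne').trans (h₂.inv_mul_sub_one_eq ha hτ hg.ne').symm)
    rw [h₁.eq_logisticFactor_div_add ha hτ hg.ne' t ht,
      h₂.eq_logisticFactor_div_add ha hτ hg.ne' t ht, hc]
end

section
/- Let τ > 0, γ > 0, let a : ℝ → ℝ be continuous, and let G : [0, ∞) → [0, ∞) satisfy G(u) > 0 for u > 0, with u ↦ G(u)/u nonincreasing on (0, ∞). Suppose U₁, U₂ : (0, τ] → (0, ∞) are both continuous on (0, τ], differentiable on (0, τ) with Uᵢ'(t) = γ Uᵢ(t)(a(t) − Uᵢ(t)) for all t ∈ (0, τ), and the right-limit of Uᵢ at 0 equals G(Uᵢ(τ)), for i = 1, 2. Then U₁(t) = U₂(t) for all t ∈ (0, τ]. -/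
open Set Filter

private lemma stmt19_aux {u v Gu Gv Eτ I : ℝ} (hu : 0 < u) (_hv : 0 < v)
    (hGu : 0 < Gu) (hGv : 0 < Gv) (hI : 0 < I)
    (h1 : Eτ / u = 1 / Gu + I) (h2 : Eτ / v = 1 / Gv + I)
    (hm : u * Gv ≤ v * Gu) : v ≤ u := by
  rw [div_eq_iff hu.ne'] at h1
  rw [div_eq_iff _hv.ne'] at h2
  have hdiv : u / Gu ≤ v / Gv := (div_le_div_iff₀ hGu hGv).2 hm
  have e1 : Eτ = u / Gu + I * u := by rw [h1]; field_simp
  have e2 : Eτ = v / Gv + I * v := by rw [h2]; field_simp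
  have : I * v ≤ I * u := by linarith
  exact le_of_mul_le_mul_left this hI

theorem stmt_19 (τ γ : ℝ) (a G U₁ U₂ : ℝ → ℝ)
    (hτ : 0 < τ) (hγ : 0 < γ) (ha : Continuous a)
    (hGpos : ∀ u : ℝ, 0 < u → 0 < G u)
    (hGmono : ∀ u v : ℝ, 0 < u → u ≤ v → G v / v ≤ G u / u)
    (h₁cont : ContinuousOn U₁ (Set.Ioc 0 τ))
    (h₁pos : ∀ t ∈ Set.Ioc (0:ℝ) τ, 0 < U₁ t)
    (h₁deriv : ∀ t ∈ Set.Ioo (0:ℝ) τ,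
      HasDerivAt U₁ (γ * U₁ t * (a t - U₁ t)) t)
    (h₁lim : Filter.Tendsto U₁ (nhdsWithin (0:ℝ) (Set.Ioi 0)) (nhds (G (U₁ τ))))
    (h₂cont : ContinuousOn U₂ (Set.Ioc 0 τ))
    (h₂pos : ∀ t ∈ Set.Ioc (0:ℝ) τ, 0 < U₂ t)
    (h₂deriv : ∀ t ∈ Set.Ioo (0:ℝ) τ,
      HasDerivAt U₂ (γ * U₂ t * (a t - U₂ t)) t)
    (h₂lim : Filter.Tendsto U₂ (nhdsWithin (0:ℝ) (Set.Ioi 0)) (nhds (G (U₂ τ)))) :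
    ∀ t ∈ Set.Ioc (0:ℝ) τ, U₁ t = U₂ t := by
  -- Setup: A = ∫ a, E = exp (γ A), J = ∫ E
  set A : ℝ → ℝ := fun t => ∫ s in (0:ℝ)..t, a s with hAdef
  have hAderiv : ∀ t : ℝ, HasDerivAt A (a t) t := fun t =>
    (ha.integral_hasStrictDerivAt 0 t).hasDerivAt
  set E : ℝ → ℝ := fun t => Real.exp (γ * A t) with hEdef
  have hEpos : ∀ t, 0 < E t := fun t => Real.exp_pos _
  have hEderiv : ∀ t : ℝ, HasDerivAt E (γ * a t * E t) t := by
    intro t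
    have h1 : HasDerivAt (fun t => γ * A t) (γ * a t) t := (hAderiv t).const_mul γ
    have h2 := h1.exp
    simpa [hEdef, mul_comm] using h2
  have hEcont : Continuous E := by
    rw [continuous_iff_continuousAt]; exact fun t => (hEderiv t).continuousAt
  set J : ℝ → ℝ := fun t => ∫ s in (0:ℝ)..t, E s with hJdef
  have hJderiv : ∀ t : ℝ, HasDerivAt J (E t) t := fun t =>
    (hEcont.integral_hasStrictDerivAt 0 t).hasDerivAt
  have hJcont : Continuous J := by
    rw [continuous_iff_continuousAt]; exact fun t => (hJderiv t).continuousAt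
  have hA0 : A 0 = 0 := intervalIntegral.integral_same
  have hE0 : E 0 = 1 := by simp [hEdef, hA0]
  have hJ0 : J 0 = 0 := intervalIntegral.integral_same
  have hJτ : 0 < J τ :=
    intervalIntegral.intervalIntegral_pos_of_pos_on (hEcont.intervalIntegrable _ _)
      (fun x _ => hEpos x) hτ
  -- Main lemma, for a single solution U
  have main : ∀ U : ℝ → ℝ, ContinuousOn U (Set.Ioc 0 τ) →
      (∀ t ∈ Set.Ioc (0:ℝ) τ, 0 < U t) →
      (∀ t ∈ Set.Ioo (0:ℝ) τ, HasDerivAt U (γ * U t * (a t - U t)) t) →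
      Filter.Tendsto U (nhdsWithin (0:ℝ) (Set.Ioi 0)) (nhds (G (U τ))) →
      ∀ t ∈ Set.Ioc (0:ℝ) τ, E t / U t - γ * J t = 1 / G (U τ) := by
    intro U hUcont hUpos hUderiv hUlim
    set F : ℝ → ℝ := fun t => E t / U t - γ * J t with hFdef
    have hFderiv : ∀ t ∈ Set.Ioo (0:ℝ) τ, HasDerivAt F 0 t := by
      intro t ht
      have htm : t ∈ Set.Ioc (0:ℝ) τ := ⟨ht.1, ht.2.le⟩
      have hU := hUpos t htm
      have hd1 : HasDerivAt (fun t => E t / U t)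
          ((γ * a t * E t * U t - E t * (γ * U t * (a t - U t))) / (U t)^2) t :=
        (hEderiv t).div (hUderiv t ht) hU.ne'
      have hd2 : HasDerivAt (fun t => γ * J t) (γ * E t) t := (hJderiv t).const_mul γ
      have hd3 := hd1.sub hd2
      have heq : (γ * a t * E t * U t - E t * (γ * U t * (a t - U t))) / (U t)^2 - γ * E t
          = 0 := by
        field_simp
        ring
      rw [heq] at hd3
      exact hd3
    have hFcont : ContinuousOn F (Set.Ioc 0 τ) := by
      apply ContinuousOn.sub
      · exact (hEcont.continuousOn).div hUcont (fun t ht => (hUpos t ht).ne')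
      · exact (hJcont.continuousOn).const_smul γ
    -- F is constant on Ioc 0 τ
    have hFconst : ∀ t ∈ Set.Ioc (0:ℝ) τ, F t = F τ := by
      intro t ht
      have hsub : Set.Icc t τ ⊆ Set.Ioc 0 τ := fun x hx => ⟨lt_of_lt_of_le ht.1 hx.1, hx.2⟩
      have := constant_of_has_deriv_right_zero (f := F) (a := t) (b := τ)
        (hFcont.mono hsub)
        (fun x hx => (hFderiv x ⟨lt_of_lt_of_le ht.1 hx.1, hx.2⟩).hasDerivWithinAt)
        τ ⟨ht.2, le_refl τ⟩
      exact this.symm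
    -- Limit of F at 0⁺ is 1 / G (U τ)
    have hGτ : 0 < G (U τ) := hGpos _ (hUpos τ ⟨hτ, le_refl τ⟩)
    have hElim : Filter.Tendsto E (nhdsWithin (0:ℝ) (Set.Ioi 0)) (nhds 1) := by
      have := hEcont.continuousAt (x := (0:ℝ))
      rw [ContinuousAt, hE0] at this
      exact this.mono_left nhdsWithin_le_nhds
    have hJlim : Filter.Tendsto (fun t => γ * J t) (nhdsWithin (0:ℝ) (Set.Ioi 0))
        (nhds 0) := by
      have := (hJcont.continuousAt (x := (0:ℝ)))
      rw [ContinuousAt, hJ0] at this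
      have h2 := this.const_mul γ
      simpa using h2.mono_left nhdsWithin_le_nhds
    have hFlim : Filter.Tendsto F (nhdsWithin (0:ℝ) (Set.Ioi 0))
        (nhds (1 / G (U τ))) := by
      have hdiv := hElim.div hUlim hGτ.ne'
      have := hdiv.sub hJlim
      simpa using this
    -- F is eventually equal to F τ near 0⁺
    have hmem : Set.Ioc (0:ℝ) τ ∈ nhdsWithin (0:ℝ) (Set.Ioi 0) :=
      Ioc_mem_nhdsGT_of_mem ⟨le_refl 0, hτ⟩
    have hFlim2 : Filter.Tendsto F (nhdsWithin (0:ℝ) (Set.Ioi 0)) (nhds (F τ)) := by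
      have hev : F =ᶠ[nhdsWithin (0:ℝ) (Set.Ioi 0)] fun _ => F τ :=
        Filter.eventually_of_mem hmem (fun x hx => hFconst x hx)
      exact Filter.Tendsto.congr' hev.symm tendsto_const_nhds
    have hFτ : F τ = 1 / G (U τ) := tendsto_nhds_unique hFlim2 hFlim
    intro t ht
    rw [show E t / U t - γ * J t = F t from rfl, hFconst t ht, hFτ]
  have key₁ := main U₁ h₁cont h₁pos h₁deriv h₁lim
  have key₂ := main U₂ h₂cont h₂pos h₂deriv h₂lim
  have hτmem : τ ∈ Set.Ioc (0:ℝ) τ := ⟨hτ, le_refl τ⟩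
  have hu : 0 < U₁ τ := h₁pos τ hτmem
  have hv : 0 < U₂ τ := h₂pos τ hτmem
  have hGu : 0 < G (U₁ τ) := hGpos _ hu
  have hGv : 0 < G (U₂ τ) := hGpos _ hv
  have hI : 0 < γ * J τ := mul_pos hγ hJτ
  have e1 : E τ / U₁ τ = 1 / G (U₁ τ) + γ * J τ := by
    have := key₁ τ hτmem; linarith
  have e2 : E τ / U₂ τ = 1 / G (U₂ τ) + γ * J τ := by
    have := key₂ τ hτmem; linarith
  -- U₁ τ = U₂ τ
  have hττ : U₁ τ = U₂ τ := by
    rcases le_total (U₁ τ) (U₂ τ) with hle | hle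
    · have hm := hGmono _ _ hu hle
      have hm' : U₁ τ * G (U₂ τ) ≤ U₂ τ * G (U₁ τ) := by
        rw [div_le_div_iff₀ hv hu] at hm
        linarith
      exact le_antisymm hle (stmt19_aux hu hv hGu hGv hI e1 e2 hm')
    · have hm := hGmono _ _ hv hle
      have hm' : U₂ τ * G (U₁ τ) ≤ U₁ τ * G (U₂ τ) := by
        rw [div_le_div_iff₀ hu hv] at hm
        linarith
      exact le_antisymm (stmt19_aux hv hu hGv hGu hI e2 e1 hm') hle
  -- Conclude equality on all of Ioc 0 τ
  intro t ht
  have k1 := key₁ t ht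
  have k2 := key₂ t ht
  rw [hττ] at k1
  have hq : E t / U₁ t = E t / U₂ t := by linarith
  have h1 := h₁pos t ht
  have h2 := h₂pos t ht
  have hE := hEpos t
  rw [div_eq_div_iff h1.ne' h2.ne'] at hq
  have := mul_left_cancel₀ hE.ne' (by linarith : E t * U₁ t = E t * U₂ t)
  exact this
end
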